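/- There is a homeomorphism h : C → K such that h(d) = σ(d) for every d ∈ D and h[V_d] = K ∩ W(d) for every d ∈ D; in particular K is homeomorphic to the Cantor space 2^ℕ. -/

import Mathlib

/-!
Truncating a point `x` of the Cantor space to its first `n` support points gives a sequence
`d₀, d₁, …` in `D` that either becomes constant equal to `x` (when `x ∈ D`) or satisfies
`dₙ₊₁ ∈ D_{dₙ}` for all `n`. By condition (2) the balls `cl W(dₙ)` are nested with radii
at most `2⁻ⁿ`, so `σ(dₙ)` converges, and `h(x)` is its limit. Conditions (2) and (3) force
`d` to be a truncation of `x` as soon as `h(x) ∈ cl W(d)`; this gives injectivity and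
`h[V_d] = K ∩ W(d)`. Condition (1) gives continuity at the points of `D` and `σ(D) ⊆ K`.
Every point of `K` is within `2⁻ⁿ` of some `σ(d)`, `d ∈ D_n`, so the compact image of `h`
is all of `K`.
-/

open Set Topology

/-- The Cantor space `2^ℕ`, with coordinates indexed by the positive integers. -/
abbrev Cant : Type := ℕ+ → Bool

/-- The support of a point of the Cantor space, as a set of (positive) natural numbers. -/
def ksupp (x : Cant) : Set ℕ := {i | ∃ h : 0 < i, x ⟨i, h⟩ = true}

/-- The plane. -/
abbrev Plane : Type := EuclideanSpace ℝ (Fin 2)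

/-- `N_d = max supp d` (with `sSup ∅ = 0` for the zero point). -/
noncomputable def Nd (d : Cant) : ℕ := sSup (ksupp d)

/-- The basic clopen set `V_d = {y : y(i) = d(i) for 1 ≤ i ≤ N_d}`. -/
noncomputable def Vd (d : Cant) : Set Cant :=
  {y | ∀ i : ℕ+, (i : ℕ) ≤ Nd d → y i = d i}

/-- The set `D_d` of children of `d ∈ D`: the points of `D_{k_d+1}` agreeing with `d`
on the coordinates `1, …, N_d`. -/
noncomputable def Dch (d : Cant) : Set Cant :=
  {e | (ksupp e).Finite ∧ (ksupp e).ncard = (ksupp d).ncard + 1 ∧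
    ∀ i : ℕ+, (i : ℕ) ≤ Nd d → e i = d i}

/-- The ball `W(d) = B(σ(d), 2^{−ℓ(d)})`. -/
noncomputable def Wb (σ : Cant → Plane) (ℓ : Cant → ℕ) (d : Cant) : Set Plane :=
  Metric.ball (σ d) ((2 : ℝ) ^ (-(ℓ d : ℤ)))

/-- The ball `U(d) = B(σ(d), 2^{−ℓ(d)−1})`. -/
noncomputable def Ub (σ : Cant → Plane) (ℓ : Cant → ℕ) (d : Cant) : Set Plane :=
  Metric.ball (σ d) ((2 : ℝ) ^ (-(ℓ d : ℤ) - 1))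

/-- The resulting Cantor set `K = ⋂_n cl (⋃ {W(d) : d ∈ D_n})`. -/
noncomputable def Kset (σ : Cant → Plane) (ℓ : Cant → ℕ) : Set Plane :=
  ⋂ n : ℕ, closure (⋃ d ∈ {d : Cant | (ksupp d).Finite ∧ (ksupp d).ncard = n}, Wb σ ℓ d)

/-- The closed set `F(d) = cl U(d) \ ⋃_{e ∈ D_d} W(e)`. -/
noncomputable def Fd (σ : Cant → Plane) (ℓ : Cant → ℕ) (d : Cant) : Set Plane :=
  closure (Ub σ ℓ d) \ ⋃ e ∈ Dch d, Wb σ ℓ e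

/-- The three conditions imposed on the maps `σ : D → ℝ²` and `ℓ : D → ω`:
(1) `⟨σ(e) : e ∈ D_d⟩` converges to `σ(d)` (in the sense that `σ(e)` is close to `σ(d)`
    once the added support element `N_e` of the child `e` is large);
(2) `cl W(e) ⊆ U(d) \ {σ(d)}` whenever `e ∈ D_d`;
(3) `{cl W(d) : d ∈ D_n}` is pairwise disjoint for every `n`. -/
def CantorConds (σ : Cant → Plane) (ℓ : Cant → ℕ) : Prop :=
  (∀ d : Cant, (ksupp d).Finite → ∀ ε > (0 : ℝ), ∃ M : ℕ, ∀ e ∈ Dch d,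
      M ≤ Nd e → dist (σ e) (σ d) < ε) ∧
  (∀ d : Cant, (ksupp d).Finite → ∀ e ∈ Dch d,
      closure (Wb σ ℓ e) ⊆ Ub σ ℓ d \ {σ d}) ∧
  (∀ n : ℕ, ∀ d e : Cant, (ksupp d).Finite → (ksupp d).ncard = n →
      (ksupp e).Finite → (ksupp e).ncard = n → d ≠ e →
      Disjoint (closure (Wb σ ℓ d)) (closure (Wb σ ℓ e)))

open Metric Filter

namespace Cant

def Dn (n : ℕ) : Set Cant := {d | (ksupp d).Finite ∧ (ksupp d).ncard = n}

lemma Kset_eq (σ : Cant → Plane) (ℓ : Cant → ℕ) :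
    Kset σ ℓ = ⋂ n, closure (⋃ d ∈ Dn n, Wb σ ℓ d) := rfl

lemma encard_ksupp_of_mem_Dn {d : Cant} {k : ℕ} (hd : d ∈ Dn k) : (ksupp d).encard = k := by
  rw [← hd.1.cast_ncard_eq, hd.2]

lemma coe_mem_ksupp {x : Cant} {i : ℕ+} : (i : ℕ) ∈ ksupp x ↔ x i = true :=
  ⟨fun ⟨_, h⟩ => h, fun h => ⟨i.pos, h⟩⟩

lemma ksupp_injective : Function.Injective ksupp := by
  intro x y h
  funext i
  rw [Bool.eq_iff_iff, ← coe_mem_ksupp, ← coe_mem_ksupp, h]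

lemma le_Nd {x : Cant} (hx : (ksupp x).Finite) {i : ℕ} (hi : i ∈ ksupp x) : i ≤ Nd x :=
  le_csSup hx.bddAbove hi

lemma lt_Nd_of_inter_Iic_subset {x e : Cant} {M : ℕ} (hx : (ksupp x).Finite)
    (he : (ksupp e).Finite) (hlt : (ksupp x).ncard < (ksupp e).ncard)
    (hsub : ksupp e ∩ Iic M ⊆ ksupp x) : M < Nd e := by
  by_contra! hM
  have : ksupp e ⊆ ksupp x := fun i hi => hsub ⟨hi, (le_Nd he hi).trans hM⟩
  exact (ncard_le_ncard this hx).not_gt hlt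

noncomputable def countUpTo (x : Cant) (m : ℕ) : ℕ := (ksupp x ∩ Iic m).ncard

lemma countUpTo_zero (x : Cant) : countUpTo x 0 = 0 := by
  rw [countUpTo, ncard_eq_zero ((finite_Iic 0).inter_of_right _)]
  exact eq_empty_of_forall_notMem fun i ⟨⟨hi, _⟩, hi0⟩ => by
    simp only [mem_Iic] at hi0
    omega

lemma countUpTo_succ_of_mem {x : Cant} {m : ℕ} (h : m + 1 ∈ ksupp x) :
    countUpTo x (m + 1) = countUpTo x m + 1 := by
  have hIic : Iic (m + 1) = insert (m + 1) (Iic m) := Order.Iic_succ m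
  rw [countUpTo, countUpTo, hIic, inter_insert_of_mem h,
    ncard_insert_of_notMem (by simp) ((finite_Iic m).inter_of_right _)]

lemma countUpTo_succ_of_notMem {x : Cant} {m : ℕ} (h : m + 1 ∉ ksupp x) :
    countUpTo x (m + 1) = countUpTo x m := by
  have hIic : Iic (m + 1) = insert (m + 1) (Iic m) := Order.Iic_succ m
  rw [countUpTo, countUpTo, hIic, inter_insert_of_notMem h]

lemma countUpTo_mono (x : Cant) : Monotone (countUpTo x) :=
  monotone_nat_of_le_succ fun m => by
    by_cases h : m + 1 ∈ ksupp x
    · rw [countUpTo_succ_of_mem h]; omega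
    · rw [countUpTo_succ_of_notMem h]

lemma countUpTo_lt_countUpTo {x : Cant} {i j : ℕ} (hij : i < j) (hj : j ∈ ksupp x) :
    countUpTo x i < countUpTo x j := by
  obtain ⟨m, rfl⟩ : ∃ m, j = m + 1 := ⟨j - 1, by omega⟩
  have := countUpTo_mono x (Nat.le_of_lt_succ hij)
  rw [countUpTo_succ_of_mem hj]
  omega

lemma countUpTo_le_ncard {x : Cant} (hx : (ksupp x).Finite) (m : ℕ) :
    countUpTo x m ≤ (ksupp x).ncard :=
  ncard_le_ncard inter_subset_left hx

lemma countUpTo_eq_ncard {x : Cant} {M : ℕ} (hM : ksupp x ⊆ Iic M) :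
    countUpTo x M = (ksupp x).ncard := by
  rw [countUpTo, inter_eq_left.2 hM]

lemma countUpTo_le_encard (x : Cant) (m : ℕ) : (countUpTo x m : ℕ∞) ≤ (ksupp x).encard := by
  rw [countUpTo, ((finite_Iic m).inter_of_right _).cast_ncard_eq]
  exact encard_mono inter_subset_left

lemma exists_le_countUpTo {x : Cant} {n : ℕ} (h : (n : ℕ∞) ≤ (ksupp x).encard) :
    ∃ m, n ≤ countUpTo x m := by
  obtain ⟨t, hts, htn⟩ := exists_subset_encard_eq h
  have ht : t.Finite := finite_of_encard_eq_coe htn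
  refine ⟨sSup t, ?_⟩
  have hsub : t ⊆ ksupp x ∩ Iic (sSup t) := fun i hi => ⟨hts hi, le_csSup ht.bddAbove hi⟩
  calc n = t.ncard := by rw [ncard_def, htn, ENat.toNat_natCast]
    _ ≤ countUpTo x (sSup t) := ncard_le_ncard hsub ((finite_Iic _).inter_of_right _)

lemma countUpTo_congr {x y : Cant} {M m : ℕ} (h : ksupp y ∩ Iic M = ksupp x ∩ Iic M)
    (hm : m ≤ M) : countUpTo y m = countUpTo x m := by
  have hIic : Iic m = Iic M ∩ Iic m := by rw [Iic_inter_Iic, min_eq_right hm]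
  rw [countUpTo, countUpTo, hIic, ← inter_assoc, ← inter_assoc, h]

noncomputable def trunc (n : ℕ) (x : Cant) : Cant := fun i => x i && decide (countUpTo x i ≤ n)

lemma mem_ksupp_trunc {n : ℕ} {x : Cant} {i : ℕ} :
    i ∈ ksupp (trunc n x) ↔ i ∈ ksupp x ∧ countUpTo x i ≤ n := by
  simp only [ksupp, trunc, Bool.and_eq_true, PNat.mk_coe]
  exact ⟨fun ⟨h, h1, h2⟩ => ⟨⟨h, h1⟩, of_decide_eq_true h2⟩,
    fun ⟨⟨h, h1⟩, h2⟩ => ⟨h, h1, decide_eq_true h2⟩⟩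

lemma ksupp_trunc_subset (n : ℕ) (x : Cant) : ksupp (trunc n x) ⊆ ksupp x :=
  fun _ hi => (mem_ksupp_trunc.1 hi).1

lemma trunc_apply_of_countUpTo_le {n : ℕ} {x : Cant} {i : ℕ+} (h : countUpTo x i ≤ n) :
    trunc n x i = x i := by
  simp [trunc, h]

lemma trunc_zero (x : Cant) : trunc 0 x = fun _ => false := by
  funext i
  cases hxi : x i
  · simp [trunc, hxi]
  · have := countUpTo_lt_countUpTo i.pos (coe_mem_ksupp.2 hxi)
    simp [trunc, hxi]
    omega

lemma countUpTo_trunc (n : ℕ) (x : Cant) (m : ℕ) :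
    countUpTo (trunc n x) m = min (countUpTo x m) n := by
  induction m with
  | zero => simp [countUpTo_zero]
  | succ m ih =>
    by_cases hm : m + 1 ∈ ksupp x
    · by_cases hmn : countUpTo x (m + 1) ≤ n
      · rw [countUpTo_succ_of_mem (mem_ksupp_trunc.2 ⟨hm, hmn⟩), ih]
        rw [countUpTo_succ_of_mem hm] at hmn ⊢
        omega
      · rw [countUpTo_succ_of_notMem fun h => hmn (mem_ksupp_trunc.1 h).2, ih]
        rw [countUpTo_succ_of_mem hm] at hmn ⊢
        omega
    · rw [countUpTo_succ_of_notMem fun h => hm (mem_ksupp_trunc.1 h).1, ih,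
        countUpTo_succ_of_notMem hm]

lemma trunc_mem_Dn {n : ℕ} {x : Cant} (h : (n : ℕ∞) ≤ (ksupp x).encard) :
    trunc n x ∈ Dn n := by
  obtain ⟨m, hm⟩ := exists_le_countUpTo h
  have hsub : ksupp (trunc n x) ⊆ Iic m := by
    intro i hi
    rw [mem_ksupp_trunc] at hi
    by_contra him
    have := countUpTo_lt_countUpTo (not_le.1 him) hi.1
    omega
  refine ⟨(finite_Iic m).subset hsub, ?_⟩
  rw [← countUpTo_eq_ncard hsub, countUpTo_trunc]
  omega

lemma trunc_eq_self {n : ℕ} {x : Cant} (h : (ksupp x).encard ≤ n) : trunc n x = x := by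
  obtain ⟨hx, hn⟩ := encard_le_coe_iff_finite_ncard_le.1 h
  funext i
  exact trunc_apply_of_countUpTo_le ((countUpTo_le_ncard hx i).trans hn)

lemma trunc_eq_self_of_encard_lt {n : ℕ} {x : Cant} (h : (ksupp x).encard < (n + 1 : ℕ)) :
    trunc n x = x :=
  trunc_eq_self (ENat.lt_natCast_add_one_iff.1 (by exact_mod_cast h))

lemma trunc_eq_self_of_mem_Dn {d : Cant} {k n : ℕ} (hd : d ∈ Dn k) (hkn : k ≤ n) :
    trunc n d = d :=
  trunc_eq_self (by rw [encard_ksupp_of_mem_Dn hd]; exact_mod_cast hkn)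

lemma ksupp_trunc_finite (n : ℕ) (x : Cant) : (ksupp (trunc n x)).Finite := by
  rcases le_total (n : ℕ∞) (ksupp x).encard with h | h
  · exact (trunc_mem_Dn h).1
  · rw [trunc_eq_self h]
    exact finite_of_encard_le_coe h

lemma countUpTo_le_of_le_Nd_trunc {n : ℕ} {x : Cant} {i : ℕ+}
    (hi : (i : ℕ) ≤ Nd (trunc n x)) : countUpTo x i ≤ n := by
  have hne : (ksupp (trunc n x)).Nonempty := by
    by_contra! h
    have : Nd (trunc n x) = 0 := by rw [Nd, h]; exact csSup_empty
    exact i.ne_zero (by omega)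
  have hN := Nat.sSup_mem hne (ksupp_trunc_finite n x).bddAbove
  exact (countUpTo_mono x hi).trans (mem_ksupp_trunc.1 hN).2

lemma trunc_succ_mem_Dch {n : ℕ} {x : Cant} (h : ((n + 1 : ℕ) : ℕ∞) ≤ (ksupp x).encard) :
    trunc (n + 1) x ∈ Dch (trunc n x) := by
  have hn := trunc_mem_Dn ((Nat.cast_le.2 n.le_succ).trans h)
  have hn1 := trunc_mem_Dn h
  refine ⟨hn1.1, by rw [hn1.2, hn.2], fun i hi => ?_⟩
  have := countUpTo_le_of_le_Nd_trunc hi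
  rw [trunc_apply_of_countUpTo_le this, trunc_apply_of_countUpTo_le (by omega)]

lemma trunc_succ_mem_Dch_or_eq (n : ℕ) (x : Cant) :
    trunc (n + 1) x ∈ Dch (trunc n x) ∨ trunc (n + 1) x = trunc n x := by
  rcases le_or_gt ((n + 1 : ℕ) : ℕ∞) (ksupp x).encard with h | h
  · exact .inl (trunc_succ_mem_Dch h)
  · right
    rw [trunc_eq_self_of_encard_lt h, trunc_eq_self (le_of_lt h)]

def cylinder (x : Cant) (M : ℕ) : Set Cant := {y | ∀ i : ℕ+, (i : ℕ) ≤ M → y i = x i}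

lemma self_mem_cylinder (x : Cant) (M : ℕ) : x ∈ cylinder x M := fun _ _ => rfl

lemma isOpen_cylinder (x : Cant) (M : ℕ) : IsOpen (cylinder x M) := by
  have : cylinder x M = Set.pi {i : ℕ+ | (i : ℕ) ≤ M} fun i => {x i} := by
    ext y
    simp [cylinder, Set.mem_pi]
  rw [this]
  exact isOpen_set_pi ((finite_Iic M).preimage PNat.coe_injective.injOn)
    fun _ _ => isOpen_discrete _

lemma isOpen_Vd (d : Cant) : IsOpen (Vd d) := isOpen_cylinder d (Nd d)

lemma ksupp_inter_Iic_eq {x y : Cant} {M : ℕ} (hy : y ∈ cylinder x M) :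
    ksupp y ∩ Iic M = ksupp x ∩ Iic M := by
  ext i
  constructor
  · rintro ⟨⟨hi, h⟩, hiM⟩
    exact ⟨⟨hi, by rwa [← hy ⟨i, hi⟩ hiM]⟩, hiM⟩
  · rintro ⟨⟨hi, h⟩, hiM⟩
    exact ⟨⟨hi, by rwa [hy ⟨i, hi⟩ hiM]⟩, hiM⟩

lemma trunc_eq_of_mem_cylinder {d y : Cant} {k M : ℕ} (hd : d ∈ Dn k) (hM : Nd d ≤ M)
    (hy : y ∈ cylinder d M) : trunc k y = d := by
  have hS := ksupp_inter_Iic_eq hy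
  have hdM : ksupp d ⊆ Iic M := fun i hi => (le_Nd hd.1 hi).trans hM
  have hcnt : countUpTo y M = k := by
    rw [countUpTo_congr hS le_rfl, countUpTo_eq_ncard hdM, hd.2]
  apply ksupp_injective
  ext i
  rw [mem_ksupp_trunc]
  constructor
  · rintro ⟨hi, hik⟩
    by_cases hiM : i ≤ M
    · exact (hS ▸ ⟨hi, hiM⟩ : i ∈ ksupp d ∩ Iic M).1
    · have := countUpTo_lt_countUpTo (not_le.1 hiM) hi
      omega
  · intro hi
    have hiy : i ∈ ksupp y ∩ Iic M := hS ▸ ⟨hi, hdM hi⟩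
    exact ⟨hiy.1, (countUpTo_mono y hiy.2).trans hcnt.le⟩

lemma mem_Vd_iff {d x : Cant} {k : ℕ} (hd : d ∈ Dn k) : x ∈ Vd d ↔ trunc k x = d := by
  refine ⟨trunc_eq_of_mem_cylinder hd le_rfl, fun h i hi => ?_⟩
  subst h
  exact (trunc_apply_of_countUpTo_le (countUpTo_le_of_le_Nd_trunc hi)).symm

lemma ksupp_update_true (x : Cant) (q : ℕ+) :
    ksupp (Function.update x q true) = insert (q : ℕ) (ksupp x) := by
  ext i
  rcases Nat.eq_zero_or_pos i with rfl | hi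
  · simp [ksupp, q.ne_zero.symm]
  · lift i to ℕ+ using hi
    rw [coe_mem_ksupp, mem_insert_iff, coe_mem_ksupp, PNat.coe_inj]
    by_cases h : i = q
    · simp [h]
    · simp [h]

lemma exists_mem_Dch_le_Nd {d : Cant} (hd : (ksupp d).Finite) (M : ℕ) :
    ∃ e ∈ Dch d, M ≤ Nd e := by
  set q : ℕ+ := ⟨max M (Nd d) + 1, by omega⟩
  have hq : Nd d < q := Nat.lt_succ_of_le (le_max_right _ _)
  have hsupp := ksupp_update_true d q
  have hfin : (ksupp (Function.update d q true)).Finite := hsupp ▸ hd.insert _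
  refine ⟨Function.update d q true,
    ⟨hfin, ?_, fun i hi => Function.update_of_ne ?_ _ _⟩, ?_⟩
  · rw [hsupp, ncard_insert_of_notMem (fun h => (le_Nd hd h).not_gt hq) hd]
  · rintro rfl
    exact hi.not_gt hq
  · have : (q : ℕ) ≤ Nd (Function.update d q true) := le_Nd hfin (hsupp ▸ mem_insert _ _)
    exact (le_max_left M (Nd d)).trans ((Nat.le_succ _).trans this)

end Cant

namespace Cant

variable {σ : Cant → Plane} {ℓ : Cant → ℕ}

noncomputable def rad (ℓ : Cant → ℕ) (d : Cant) : ℝ := 2 ^ (-(ℓ d : ℤ))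

lemma rad_pos (ℓ : Cant → ℕ) (d : Cant) : 0 < rad ℓ d := zpow_pos two_pos _

lemma Wb_eq_ball (σ : Cant → Plane) (ℓ : Cant → ℕ) (d : Cant) :
    Wb σ ℓ d = ball (σ d) (rad ℓ d) := rfl

lemma closure_Wb (σ : Cant → Plane) (ℓ : Cant → ℕ) (d : Cant) :
    closure (Wb σ ℓ d) = closedBall (σ d) (rad ℓ d) :=
  closure_ball _ (rad_pos ℓ d).ne'

lemma Ub_eq_ball (σ : Cant → Plane) (ℓ : Cant → ℕ) (d : Cant) :
    Ub σ ℓ d = ball (σ d) (rad ℓ d / 2) := by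
  rw [Ub, rad, zpow_sub₀ two_ne_zero, zpow_one]

lemma sigma_mem_Wb (σ : Cant → Plane) (ℓ : Cant → ℕ) (d : Cant) : σ d ∈ Wb σ ℓ d :=
  mem_ball_self (rad_pos ℓ d)

lemma dist_lt_half_rad {d e : Cant} (h : closure (Wb σ ℓ e) ⊆ Ub σ ℓ d \ {σ d}) :
    dist (σ e) (σ d) < rad ℓ d / 2 := by
  have := (h (subset_closure (sigma_mem_Wb σ ℓ e))).1
  rwa [Ub_eq_ball, mem_ball] at this

lemma rad_lt_dist {d e : Cant} (h : closure (Wb σ ℓ e) ⊆ Ub σ ℓ d \ {σ d}) :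
    rad ℓ e < dist (σ e) (σ d) := by
  have : σ d ∉ closure (Wb σ ℓ e) := fun hd => (h hd).2 rfl
  rwa [closure_Wb, mem_closedBall, dist_comm, not_le] at this

lemma closure_Wb_subset_Wb {d e : Cant} (h : closure (Wb σ ℓ e) ⊆ Ub σ ℓ d \ {σ d}) :
    closure (Wb σ ℓ e) ⊆ Wb σ ℓ d := by
  have hU : Ub σ ℓ d ⊆ Wb σ ℓ d := by
    rw [Ub_eq_ball, Wb_eq_ball]
    exact ball_subset_ball (by linarith [rad_pos ℓ d])
  exact fun z hz => hU (h hz).1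

lemma rad_le_of_mem_Dn (hc : CantorConds σ ℓ) {k : ℕ} {d : Cant} (hd : d ∈ Dn k) :
    rad ℓ d ≤ (1 / 2) ^ k := by
  induction k generalizing d with
  | zero => exact zpow_le_one_of_nonpos₀ one_le_two (by omega)
  | succ k ih =>
    have hp : trunc k d ∈ Dn k :=
      trunc_mem_Dn (by rw [encard_ksupp_of_mem_Dn hd]; exact_mod_cast k.le_succ)
    have hdp : d ∈ Dch (trunc k d) := by
      simpa [trunc_eq_self_of_mem_Dn hd le_rfl] using
        trunc_succ_mem_Dch (x := d) (encard_ksupp_of_mem_Dn hd).ge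
    have h := hc.2.1 _ hp.1 d hdp
    have := ih hp
    rw [pow_succ]
    linarith [rad_lt_dist h, dist_lt_half_rad h]

end Cant

namespace Cant

variable {σ : Cant → Plane} {ℓ : Cant → ℕ}

noncomputable def cantorMap (σ : Cant → Plane) (x : Cant) : Plane :=
  limUnder atTop fun n => σ (trunc n x)

lemma cauchySeq_sigma_trunc (hc : CantorConds σ ℓ) (x : Cant) :
    CauchySeq fun n => σ (trunc n x) := by
  refine cauchySeq_of_le_geometric (1 / 2) (1 / 2) (by norm_num) fun n => ?_
  rcases le_or_gt ((n + 1 : ℕ) : ℕ∞) (ksupp x).encard with h | h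
  · have hp := trunc_mem_Dn ((Nat.cast_le.2 n.le_succ).trans h)
    have := dist_lt_half_rad (hc.2.1 _ hp.1 _ (trunc_succ_mem_Dch h))
    have := rad_le_of_mem_Dn hc hp
    rw [dist_comm]
    linarith
  · rw [trunc_eq_self_of_encard_lt h, trunc_eq_self (le_of_lt h), dist_self]
    positivity

lemma tendsto_cantorMap (hc : CantorConds σ ℓ) (x : Cant) :
    Tendsto (fun n => σ (trunc n x)) atTop (𝓝 (cantorMap σ x)) :=
  (cauchySeq_sigma_trunc hc x).tendsto_limUnder

lemma cantorMap_eq_sigma (hc : CantorConds σ ℓ) {x : Cant} (hx : (ksupp x).Finite) :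
    cantorMap σ x = σ x :=
  tendsto_nhds_unique (tendsto_cantorMap hc x) <|
    tendsto_atTop_of_eventually_const (i₀ := (ksupp x).ncard) fun _ hn => by
      rw [trunc_eq_self_of_mem_Dn ⟨hx, rfl⟩ hn]

lemma antitone_closure_Wb_trunc (hc : CantorConds σ ℓ) (x : Cant) :
    Antitone fun n => closure (Wb σ ℓ (trunc n x)) := by
  refine antitone_nat_of_succ_le fun n => ?_
  rcases trunc_succ_mem_Dch_or_eq n x with h | h
  · exact (closure_Wb_subset_Wb (hc.2.1 _ (ksupp_trunc_finite n x) _ h)).trans subset_closure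
  · rw [h]

lemma cantorMap_mem_closure_Wb (hc : CantorConds σ ℓ) (x : Cant) (n : ℕ) :
    cantorMap σ x ∈ closure (Wb σ ℓ (trunc n x)) :=
  isClosed_closure.mem_of_tendsto (tendsto_cantorMap hc x) <|
    (eventually_ge_atTop n).mono fun _ hm =>
      antitone_closure_Wb_trunc hc x hm (subset_closure (sigma_mem_Wb σ ℓ _))

lemma cantorMap_mem_Wb (hc : CantorConds σ ℓ) (x : Cant) (n : ℕ) :
    cantorMap σ x ∈ Wb σ ℓ (trunc n x) := by
  rcases le_or_gt ((n + 1 : ℕ) : ℕ∞) (ksupp x).encard with h | h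
  · exact closure_Wb_subset_Wb (hc.2.1 _ (ksupp_trunc_finite n x) _ (trunc_succ_mem_Dch h))
      (cantorMap_mem_closure_Wb hc x (n + 1))
  · have hx := trunc_eq_self_of_encard_lt h
    rw [hx, cantorMap_eq_sigma hc (hx ▸ ksupp_trunc_finite n x)]
    exact sigma_mem_Wb σ ℓ x

/-- Going down the truncations of `d`, the truncations of `x` cannot part from them at a level
where both have a point (condition (3)), nor stop at `x` itself (condition (2)). -/
lemma trunc_eq_of_cantorMap_mem_closure (hc : CantorConds σ ℓ) {d x : Cant} {k : ℕ}
    (hd : d ∈ Dn k) (hx : cantorMap σ x ∈ closure (Wb σ ℓ d)) : trunc k x = d := by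
  suffices ∀ m ≤ k, trunc m x = trunc m d by
    rw [this k le_rfl, trunc_eq_self_of_mem_Dn hd le_rfl]
  intro m hm
  induction m with
  | zero => rw [trunc_zero, trunc_zero]
  | succ m ih =>
    have hdm : ((m + 1 : ℕ) : ℕ∞) ≤ (ksupp d).encard := by
      rw [encard_ksupp_of_mem_Dn hd]; exact_mod_cast hm
    have hxe : cantorMap σ x ∈ closure (Wb σ ℓ (trunc (m + 1) d)) := by
      have hdk : closure (Wb σ ℓ (trunc k d)) ⊆ _ := antitone_closure_Wb_trunc hc d hm
      rw [trunc_eq_self_of_mem_Dn hd le_rfl] at hdk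
      exact hdk hx
    rcases le_or_gt ((m + 1 : ℕ) : ℕ∞) (ksupp x).encard with hxm | hxm
    · by_contra hne
      have hx' := trunc_mem_Dn hxm
      have hd' := trunc_mem_Dn hdm
      exact disjoint_left.1 (hc.2.2 _ _ _ hx'.1 hx'.2 hd'.1 hd'.2 hne)
        (cantorMap_mem_closure_Wb hc x (m + 1)) hxe
    · have htx := trunc_eq_self_of_encard_lt hxm
      have hxd : x = trunc m d := htx.symm.trans (ih (by omega))
      have h2 := hc.2.1 _ (ksupp_trunc_finite m d) _ (trunc_succ_mem_Dch hdm) hxe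
      rw [cantorMap_eq_sigma hc (htx ▸ ksupp_trunc_finite m x), hxd] at h2
      exact absurd rfl h2.2

lemma mem_Vd_iff_cantorMap_mem_Wb (hc : CantorConds σ ℓ) {d x : Cant} {k : ℕ}
    (hd : d ∈ Dn k) : x ∈ Vd d ↔ cantorMap σ x ∈ Wb σ ℓ d := by
  rw [mem_Vd_iff hd]
  refine ⟨fun h => h ▸ cantorMap_mem_Wb hc x k, fun h => ?_⟩
  exact trunc_eq_of_cantorMap_mem_closure hc hd (subset_closure h)

lemma cantorMap_ne_of_mem_ksupp (hc : CantorConds σ ℓ) {x y : Cant} {i : ℕ}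
    (hx : i ∈ ksupp x) (hy : i ∉ ksupp y) : cantorMap σ x ≠ cantorMap σ y := by
  intro hxy
  set n := countUpTo x i
  have hd : trunc n x ∈ Dn n := trunc_mem_Dn (countUpTo_le_encard x i)
  have hyx : trunc n y = trunc n x :=
    trunc_eq_of_cantorMap_mem_closure hc hd (hxy ▸ cantorMap_mem_closure_Wb hc x n)
  have hi : i ∈ ksupp (trunc n x) := mem_ksupp_trunc.2 ⟨hx, le_rfl⟩
  rw [← hyx] at hi
  exact hy (ksupp_trunc_subset n y hi)

lemma cantorMap_injective (hc : CantorConds σ ℓ) : Function.Injective (cantorMap σ) := by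
  intro x y hxy
  apply ksupp_injective
  ext i
  by_contra hi
  by_cases hix : i ∈ ksupp x
  · exact cantorMap_ne_of_mem_ksupp hc hix (fun hiy => hi ⟨fun _ => hiy, fun _ => hix⟩) hxy
  · exact cantorMap_ne_of_mem_ksupp hc (by tauto) hix hxy.symm

end Cant

namespace Cant

variable {σ : Cant → Plane} {ℓ : Cant → ℕ}

/-- A nearby `y` agrees with `x` up to a large coordinate, so its first truncation beyond `x`
is a child `e` of `x` with large `N_e`, and `cantorMap σ y ∈ cl W(e)` lies within
`2 · dist (σ e) (σ x)` of `σ x`; condition (1) makes this small. -/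
lemma continuousAt_cantorMap_of_finite (hc : CantorConds σ ℓ) {x : Cant}
    (hx : (ksupp x).Finite) : ContinuousAt (cantorMap σ) x := by
  rw [ContinuousAt, Metric.tendsto_nhds]
  intro ε hε
  obtain ⟨M, hM⟩ := hc.1 x hx (ε / 2) (half_pos hε)
  set k := (ksupp x).ncard
  have hxk : x ∈ Dn k := ⟨hx, rfl⟩
  filter_upwards [(isOpen_cylinder x (max M (Nd x))).mem_nhds (self_mem_cylinder x _)] with y hy
  have hyk : trunc k y = x := trunc_eq_of_mem_cylinder hxk (le_max_right _ _) hy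
  rw [cantorMap_eq_sigma hc hx]
  rcases le_or_gt ((k + 1 : ℕ) : ℕ∞) (ksupp y).encard with h | h
  · set e := trunc (k + 1) y
    have he : e ∈ Dch x := hyk ▸ trunc_succ_mem_Dch h
    have hNe : max M (Nd x) < Nd e := by
      refine lt_Nd_of_inter_Iic_subset hx he.1 (by rw [he.2.1]; omega) ?_
      calc ksupp e ∩ Iic _ ⊆ ksupp y ∩ Iic _ :=
            inter_subset_inter_left _ (ksupp_trunc_subset _ y)
        _ = ksupp x ∩ Iic _ := ksupp_inter_Iic_eq hy
        _ ⊆ ksupp x := inter_subset_left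
    have h2 := hc.2.1 x hx e he
    have hye : dist (cantorMap σ y) (σ e) ≤ rad ℓ e := by
      rw [← mem_closedBall, ← closure_Wb]
      exact cantorMap_mem_closure_Wb hc y (k + 1)
    calc dist (cantorMap σ y) (σ x) ≤ dist (cantorMap σ y) (σ e) + dist (σ e) (σ x) :=
          dist_triangle _ _ _
      _ < 2 * dist (σ e) (σ x) := by linarith [rad_lt_dist h2]
      _ < ε := by linarith [hM e he (le_max_left M (Nd x) |>.trans hNe.le)]
  · rw [← trunc_eq_self_of_encard_lt h, hyk, cantorMap_eq_sigma hc hx, dist_self]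
    exact hε

lemma continuousAt_cantorMap_of_infinite (hc : CantorConds σ ℓ) {x : Cant}
    (hx : (ksupp x).Infinite) : ContinuousAt (cantorMap σ) x := by
  rw [ContinuousAt, Metric.tendsto_nhds]
  intro ε hε
  obtain ⟨n, hn⟩ := exists_pow_lt_of_lt_one (half_pos hε) (by norm_num : (1 / 2 : ℝ) < 1)
  have hd : trunc n x ∈ Dn n := trunc_mem_Dn (by simp [hx.encard_eq])
  filter_upwards [(isOpen_Vd _).mem_nhds ((mem_Vd_iff hd).2 rfl)] with y hy
  have hxd := cantorMap_mem_closure_Wb hc x n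
  have hyd := cantorMap_mem_closure_Wb hc y n
  rw [(mem_Vd_iff hd).1 hy] at hyd
  rw [closure_Wb, mem_closedBall] at hxd hyd
  calc dist (cantorMap σ y) (cantorMap σ x)
        ≤ dist (cantorMap σ y) (σ (trunc n x)) + dist (cantorMap σ x) (σ (trunc n x)) :=
          dist_triangle_right _ _ _
    _ ≤ 2 * (1 / 2) ^ n := by linarith [rad_le_of_mem_Dn hc hd]
    _ < ε := by linarith

lemma continuous_cantorMap (hc : CantorConds σ ℓ) : Continuous (cantorMap σ) :=
  continuous_iff_continuousAt.2 fun x =>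
    (ksupp x).finite_or_infinite.elim (continuousAt_cantorMap_of_finite hc)
      (continuousAt_cantorMap_of_infinite hc)

lemma sigma_mem_closure_image_Dch (hc : CantorConds σ ℓ) {d : Cant} (hd : (ksupp d).Finite) :
    σ d ∈ closure (σ '' Dch d) := by
  refine Metric.mem_closure_iff.2 fun ε hε => ?_
  obtain ⟨M, hM⟩ := hc.1 d hd ε hε
  obtain ⟨e, he, hMe⟩ := exists_mem_Dch_le_Nd hd M
  exact ⟨σ e, mem_image_of_mem σ he, by rw [dist_comm]; exact hM e he hMe⟩

lemma sigma_mem_closure_iUnion_Wb (hc : CantorConds σ ℓ) (j : ℕ) :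
    ∀ {k : ℕ} {d : Cant}, d ∈ Dn k →
      σ d ∈ closure (⋃ e ∈ Dn (k + j), Wb σ ℓ e) := by
  induction j with
  | zero => exact fun hd => subset_closure (mem_biUnion hd (sigma_mem_Wb σ ℓ _))
  | succ j ih =>
    intro k d hd
    refine closure_minimal ?_ isClosed_closure (sigma_mem_closure_image_Dch hc hd.1)
    rintro _ ⟨e, he, rfl⟩
    have := ih (k := k + 1) ⟨he.1, by rw [he.2.1, hd.2]⟩
    rwa [add_right_comm, add_assoc] at this

lemma cantorMap_mem_Kset (hc : CantorConds σ ℓ) (x : Cant) : cantorMap σ x ∈ Kset σ ℓ := by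
  rw [Kset_eq, mem_iInter]
  intro n
  rcases le_or_gt (n : ℕ∞) (ksupp x).encard with h | h
  · exact closure_mono (subset_biUnion_of_mem (trunc_mem_Dn h)) (cantorMap_mem_closure_Wb hc x n)
  · have hx : (ksupp x).Finite := finite_of_encard_le_coe h.le
    have hlt : (ksupp x).ncard < n := by exact_mod_cast hx.cast_ncard_eq ▸ h
    obtain ⟨j, rfl⟩ := Nat.exists_eq_add_of_lt hlt
    rw [cantorMap_eq_sigma hc hx, add_assoc]
    exact sigma_mem_closure_iUnion_Wb hc (j + 1) ⟨hx, rfl⟩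

lemma Kset_subset_range_cantorMap (hc : CantorConds σ ℓ) :
    Kset σ ℓ ⊆ range (cantorMap σ) := by
  intro y hy
  rw [← (isCompact_range (continuous_cantorMap hc)).isClosed.closure_eq, Metric.mem_closure_iff]
  intro ε hε
  obtain ⟨n, hn⟩ := exists_pow_lt_of_lt_one (half_pos hε) (by norm_num : (1 / 2 : ℝ) < 1)
  rw [Kset_eq, mem_iInter] at hy
  obtain ⟨w, hw, hyw⟩ := Metric.mem_closure_iff.1 (hy n) (ε / 2) (half_pos hε)
  obtain ⟨d, hd, hwd⟩ := mem_iUnion₂.1 hw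
  refine ⟨σ d, ⟨d, cantorMap_eq_sigma hc hd.1⟩, ?_⟩
  have hwd : dist w (σ d) < (1 / 2) ^ n := (mem_ball.1 hwd).trans_le (rad_le_of_mem_Dn hc hd)
  linarith [dist_triangle y w (σ d)]

lemma image_cantorMap_Vd (hc : CantorConds σ ℓ) {d : Cant} (hd : (ksupp d).Finite) :
    cantorMap σ '' Vd d = Kset σ ℓ ∩ Wb σ ℓ d := by
  have hdk : d ∈ Dn (ksupp d).ncard := ⟨hd, rfl⟩
  ext y
  constructor
  · rintro ⟨x, hx, rfl⟩
    exact ⟨cantorMap_mem_Kset hc x, (mem_Vd_iff_cantorMap_mem_Wb hc hdk).1 hx⟩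
  · rintro ⟨hyK, hyW⟩
    obtain ⟨x, rfl⟩ := Kset_subset_range_cantorMap hc hyK
    exact ⟨x, (mem_Vd_iff_cantorMap_mem_Wb hc hdk).2 hyW, rfl⟩

end Cant

/-- There is a homeomorphism `h : C → K` with `h(d) = σ(d)` and `h[V_d] = K ∩ W(d)` for
every `d ∈ D`; in particular `K` is homeomorphic to the Cantor space `2^ℕ`. -/
theorem exists_homeomorph_cantor_Kset (σ : Cant → Plane) (ℓ : Cant → ℕ)
    (hc : CantorConds σ ℓ) :
    ∃ h : Cant ≃ₜ (Kset σ ℓ),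
      ∀ d : Cant, (ksupp d).Finite →
        ((h d : Plane) = σ d ∧
          Subtype.val '' (h '' Vd d) = Kset σ ℓ ∩ Wb σ ℓ d) := by
  let f : Cant ≃ Kset σ ℓ :=
    Equiv.ofBijective (fun x => ⟨Cant.cantorMap σ x, Cant.cantorMap_mem_Kset hc x⟩)
      ⟨fun x y h => Cant.cantorMap_injective hc (congrArg Subtype.val h),
        fun y => (Cant.Kset_subset_range_cantorMap hc y.2).imp fun _ hx => Subtype.ext hx⟩
  have hf : Continuous f := (Cant.continuous_cantorMap hc).subtype_mk _
  refine ⟨hf.homeoOfEquivCompactToT2, fun d hd => ⟨Cant.cantorMap_eq_sigma hc hd, ?_⟩⟩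
  rw [image_image]
  exact Cant.image_cantorMap_Vd hc hd
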